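/- arXiv:1909.09178 — 3 statements merged into one kernel-verified Lean document; each statement's English description precedes it below -/
import Mathlib

section
/- Fix an integer t > 1. Let G be a simple graph on n vertices whose edges are 3-coloured so that every vertex of G is incident to edges of all three colours and no monochromatic component of G has order m with 2m ≥ n. Let G' be the t-blow-up of G, and let the edges of G' be given any compatible 3-edge-colouring. Then no monochromatic component of G' has order m' with 2m' ≥ tn. -/
open SimpleGraph

/-- The colour-`i` subgraph of the graph `G` under the edge-colouring `c`. -/
def colourSub {V : Type*} {k : ℕ} (G : SimpleGraph V) (c : Sym2 V → Fin k) (i : Fin k) :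
    SimpleGraph V where
  Adj u v := G.Adj u v ∧ c s(u, v) = i
  symm := by
    constructor
    intro u v h
    exact ⟨h.1.symm, by rw [Sym2.eq_swap]; exact h.2⟩
  loopless := by
    constructor
    intro u h
    exact G.loopless.irrefl u h.1

/-- `K` is a monochromatic component of colour `i`: a connected component of the colour-`i`
subgraph of `G` that contains at least one edge. Its order is `K.supp.ncard`. -/
def IsMonoComp {V : Type*} {k : ℕ} (G : SimpleGraph V) (c : Sym2 V → Fin k) (i : Fin k)
    (K : (colourSub G c i).ConnectedComponent) : Prop :=
  ∃ u v, (colourSub G c i).Adj u v ∧ (colourSub G c i).connectedComponentMk u = K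

/-- The minimum degree of a finite simple graph (classical version). -/
noncomputable def minDeg {V : Type*} [Fintype V] (G : SimpleGraph V) : ℕ :=
  @SimpleGraph.minDegree V G _ (Classical.decRel _)


/-- The `t`-blow-up of a graph: vertices are pairs `(v, i)`, and `(u, i)` is adjacent to
`(v, j)` iff `u` is adjacent to `v` in `G`, or `u = v` and `i ≠ j`. -/
def blowup {V : Type*} (G : SimpleGraph V) (t : ℕ) : SimpleGraph (V × Fin t) where
  Adj x y := G.Adj x.1 y.1 ∨ (x.1 = y.1 ∧ x.2 ≠ y.2)
  symm := by
    constructor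
    intro x y h
    rcases h with h | ⟨h1, h2⟩
    · exact Or.inl h.symm
    · exact Or.inr ⟨h1.symm, h2.symm⟩
  loopless := by
    constructor
    intro x h
    rcases h with h | ⟨_, h2⟩
    · exact G.loopless.irrefl x.1 h
    · exact h2 rfl

/-- Fix t > 1. If the edges of G are 3-coloured so that every vertex is incident to all three
colours and no monochromatic component has order m with 2m ≥ n, then for any compatible
3-edge-colouring of the t-blow-up G', no monochromatic component of G' has order m' with
2m' ≥ tn. -/
theorem stmt_12 (n t : ℕ) (ht : 1 < t) (G : SimpleGraph (Fin n))
    (c : Sym2 (Fin n) → Fin 3)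
    (hall : ∀ v, ∀ i : Fin 3, ∃ u, G.Adj v u ∧ c s(v, u) = i)
    (hsmall : ∀ (i : Fin 3) (K : (colourSub G c i).ConnectedComponent),
      IsMonoComp G c i K → 2 * K.supp.ncard < n)
    (c' : Sym2 (Fin n × Fin t) → Fin 3)
    (hcomp : ∀ (u v : Fin n) (i j : Fin t), G.Adj u v → c' s((u, i), (v, j)) = c s(u, v)) :
    ∀ (col : Fin 3) (K : (colourSub (blowup G t) c' col).ConnectedComponent),
      IsMonoComp (blowup G t) c' col K → 2 * K.supp.ncard < t * n := by
  intro col K hK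
  obtain ⟨u, v, huv, hKeq⟩ := hK
  have key : ∀ x y : Fin n × Fin t, (colourSub (blowup G t) c' col).Reachable x y →
      (colourSub G c col).connectedComponentMk x.1 = (colourSub G c col).connectedComponentMk y.1 := by
    intro x y hxy
    obtain ⟨w⟩ := hxy
    induction w with
    | nil => rfl
    | cons h p ih =>
      rename_i a b d
      refine Eq.trans ?_ ih
      obtain ⟨hadj, hc⟩ := h
      rcases hadj with hG | ⟨heq, _⟩
      · apply SimpleGraph.ConnectedComponent.sound
        apply SimpleGraph.Adj.reachable
        refine ⟨hG, ?_⟩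
        have := hcomp a.1 b.1 a.2 b.2 hG
        rw [← this]
        exact hc
      · rw [heq]
  set C := (colourSub G c col).connectedComponentMk u.1 with hC
  have hmono : IsMonoComp G c col C := by
    obtain ⟨w, hw1, hw2⟩ := hall u.1 col
    exact ⟨u.1, w, ⟨hw1, hw2⟩, rfl⟩
  have hCn := hsmall col C hmono
  have hsub : K.supp ⊆ C.supp ×ˢ (Set.univ : Set (Fin t)) := by
    intro x hx
    have hx' : (colourSub (blowup G t) c' col).connectedComponentMk x = K := hx
    rw [← hKeq] at hx'
    have hreach : (colourSub (blowup G t) c' col).Reachable x u :=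
      SimpleGraph.ConnectedComponent.eq.mp hx'
    exact ⟨key x u hreach, trivial⟩
  have hfin : (C.supp ×ˢ (Set.univ : Set (Fin t))).Finite := Set.toFinite _
  have hle : K.supp.ncard ≤ (C.supp ×ˢ (Set.univ : Set (Fin t))).ncard :=
    Set.ncard_le_ncard hsub hfin
  have hprod : (C.supp ×ˢ (Set.univ : Set (Fin t))).ncard = C.supp.ncard * t := by
    rw [← Nat.card_coe_set_eq, ← Nat.card_coe_set_eq]
    rw [Nat.card_congr (Equiv.Set.prod _ _), Nat.card_prod]
    congr 1
    rw [Nat.card_coe_set_eq, Set.ncard_univ, Nat.card_eq_fintype_card, Fintype.card_fin]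
  calc 2 * K.supp.ncard ≤ 2 * (C.supp.ncard * t) := by
        rw [← hprod]; exact Nat.mul_le_mul_left 2 hle
    _ = t * (2 * C.supp.ncard) := by ring
    _ < t * n := by
        have ht0 : 0 < t := by omega
        exact Nat.mul_lt_mul_of_le_of_lt (le_refl t) hCn ht0
end

section
/- Let G be a simple graph on n vertices whose edges are 3-coloured, such that no monochromatic component has order m with 2m ≥ n. Suppose there are two distinct colours c₁ and c₂ such that for each of them G has exactly 4 components of that colour, each of order exactly n/4. Then 6·δ(G) < 5n. -/
open SimpleGraph

lemma sum_supp_card {n : ℕ} (H : SimpleGraph (Fin n)) [Fintype H.ConnectedComponent] :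
    ∑ K : H.ConnectedComponent, K.supp.ncard = n := by
  classical
  have h := Finset.card_eq_sum_card_fiberwise
      (f := H.connectedComponentMk) (s := (Finset.univ : Finset (Fin n)))
      (t := Finset.univ) (fun x _ => Finset.mem_univ _)
  simp only [Finset.card_univ, Fintype.card_fin] at h
  have h2 : ∑ K : H.ConnectedComponent, K.supp.ncard
      = ∑ K : H.ConnectedComponent,
        (Finset.filter (fun a => H.connectedComponentMk a = K) Finset.univ).card := by
    refine Finset.sum_congr rfl fun K _ => ?_
    rw [Set.ncard_eq_toFinset_card']
    congr 1
    ext v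
    simp [ConnectedComponent.mem_supp_iff]
  rw [h2]
  exact h.symm

lemma supp_ncard_pos {n : ℕ} (H : SimpleGraph (Fin n)) (K : H.ConnectedComponent) :
    0 < K.supp.ncard := by
  obtain ⟨v, rfl⟩ := K.exists_rep
  exact (Set.ncard_pos (Set.toFinite _)).mpr ⟨v, rfl⟩

lemma exists_adj_of_ne {n : ℕ} (H : SimpleGraph (Fin n)) {v w : Fin n} (hne : w ≠ v)
    (h : H.connectedComponentMk w = H.connectedComponentMk v) :
    ∃ a b, H.Adj a b ∧ H.connectedComponentMk a = H.connectedComponentMk v := by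
  have hr : H.Reachable v w := (ConnectedComponent.eq.mp h).symm
  obtain ⟨p⟩ := hr
  cases p with
  | nil => exact absurd rfl hne
  | cons hadj q => exact ⟨_, _, hadj, rfl⟩

lemma third_colour (c₁ c₂ : Fin 3) (hne : c₁ ≠ c₂) :
    ∃ c₃ : Fin 3, ∀ i : Fin 3, i ≠ c₁ → i ≠ c₂ → i = c₃ := by
  fin_cases c₁ <;> fin_cases c₂ <;> first
    | exact absurd rfl hne
    | decide

lemma all_mono {n k : ℕ} (G : SimpleGraph (Fin n)) (c : Sym2 (Fin n) → Fin k) (i : Fin k)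
    (hcard : {K : (colourSub G c i).ConnectedComponent | IsMonoComp G c i K}.ncard = 4)
    (hsize : ∀ K : (colourSub G c i).ConnectedComponent,
      IsMonoComp G c i K → 4 * K.supp.ncard = n) :
    ∀ K : (colourSub G c i).ConnectedComponent, IsMonoComp G c i K ∧ 4 * K.supp.ncard = n := by
  classical
  haveI : Fintype (colourSub G c i).ConnectedComponent := Fintype.ofFinite _
  set S : Finset (colourSub G c i).ConnectedComponent :=
    {K : (colourSub G c i).ConnectedComponent | IsMonoComp G c i K}.toFinset with hS
  have hmem : ∀ K, K ∈ S ↔ IsMonoComp G c i K := by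
    intro K; simp [hS]
  have hScard : S.card = 4 := by
    rw [← hcard, Set.ncard_eq_toFinset_card']
  have hsum : ∑ K : (colourSub G c i).ConnectedComponent, K.supp.ncard = n := sum_supp_card _
  have hsplit := Finset.sum_sdiff (f := fun K : (colourSub G c i).ConnectedComponent =>
    K.supp.ncard) (Finset.subset_univ S)
  have hSsum : ∑ K ∈ S, K.supp.ncard = n := by
    have h4 : 4 * ∑ K ∈ S, K.supp.ncard = 4 * n := by
      rw [Finset.mul_sum]
      calc ∑ K ∈ S, 4 * K.supp.ncard = ∑ K ∈ S, n :=
            Finset.sum_congr rfl fun K hK => hsize K ((hmem K).mp hK)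
        _ = 4 * n := by rw [Finset.sum_const, hScard, smul_eq_mul]
    omega
  have hrest : ∑ K ∈ Finset.univ \ S, K.supp.ncard = 0 := by
    rw [hSsum, hsum] at hsplit
    omega
  intro K
  have hKS : K ∈ S := by
    by_contra hK
    have hKm : K ∈ Finset.univ \ S := Finset.mem_sdiff.mpr ⟨Finset.mem_univ _, hK⟩
    have := Finset.sum_eq_zero_iff.mp hrest K hKm
    have hp := supp_ncard_pos _ K
    omega
  exact ⟨(hmem K).mp hKS, hsize K ((hmem K).mp hKS)⟩


/-- If the edges of G are 3-coloured with no monochromatic component of order m with 2m ≥ n,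
and two distinct colours each have exactly 4 components, each of order exactly n/4, then
6·δ(G) < 5n. -/
theorem stmt_15 (n : ℕ) (G : SimpleGraph (Fin n)) (c : Sym2 (Fin n) → Fin 3)
    (hsmall : ∀ (i : Fin 3) (K : (colourSub G c i).ConnectedComponent),
      IsMonoComp G c i K → 2 * K.supp.ncard < n)
    (c₁ c₂ : Fin 3) (hne : c₁ ≠ c₂)
    (h4 : ∀ i ∈ ({c₁, c₂} : Set (Fin 3)),
      {K : (colourSub G c i).ConnectedComponent | IsMonoComp G c i K}.ncard = 4 ∧
      ∀ K : (colourSub G c i).ConnectedComponent,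
        IsMonoComp G c i K → 4 * K.supp.ncard = n) :
    6 * minDeg G < 5 * n := by
  classical
  by_contra hcon
  push_neg at hcon
  obtain ⟨c₃, hc₃⟩ := third_colour c₁ c₂ hne
  have h1 := h4 c₁ (by simp)
  have h2 := h4 c₂ (by simp)
  have hA := all_mono G c c₁ h1.1 h1.2
  have hB := all_mono G c c₂ h2.1 h2.2
  -- n is positive
  have hn : 0 < n := by
    obtain ⟨K, hK⟩ := Set.nonempty_of_ncard_ne_zero (s :=
      {K : (colourSub G c c₁).ConnectedComponent | IsMonoComp G c c₁ K}) (by rw [h1.1]; norm_num)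
    obtain ⟨u, _, _, _⟩ := hK
    exact u.pos
  haveI : Nonempty (Fin n) := ⟨⟨0, hn⟩⟩
  -- the key per-vertex estimate
  have key : ∀ v : Fin n,
      2 * ((colourSub G c c₃).connectedComponentMk v).supp.ncard < n ∧
      2 * n + 18 ≤ 6 * ((colourSub G c c₃).connectedComponentMk v).supp.ncard := by
    intro v
    set A := ((colourSub G c c₁).connectedComponentMk v).supp with hAdef
    set B := ((colourSub G c c₂).connectedComponentMk v).supp with hBdef
    set C := ((colourSub G c c₃).connectedComponentMk v).supp with hCdef
    have hvA : v ∈ A := rfl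
    have hvB : v ∈ B := rfl
    have hvC : v ∈ C := rfl
    have hAn : 4 * A.ncard = n := (hA _).2
    have hBn : 4 * B.ncard = n := (hB _).2
    -- every neighbour of v lies in the union
    have hsub : G.neighborSet v ⊆ (A \ {v}) ∪ (B \ {v}) ∪ (C \ (A ∪ B)) := by
      intro w hw
      have hadj : G.Adj v w := hw
      have hwv : w ≠ v := hadj.ne'
      by_cases hwA : w ∈ A
      · exact Or.inl (Or.inl ⟨hwA, hwv⟩)
      by_cases hwB : w ∈ B
      · exact Or.inl (Or.inr ⟨hwB, hwv⟩)
      · have hcol1 : c s(v, w) ≠ c₁ := by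
          intro h
          exact hwA ((ConnectedComponent.connectedComponentMk_eq_of_adj (G := colourSub G c c₁) ⟨hadj, h⟩).symm)
        have hcol2 : c s(v, w) ≠ c₂ := by
          intro h
          exact hwB ((ConnectedComponent.connectedComponentMk_eq_of_adj (G := colourSub G c c₂) ⟨hadj, h⟩).symm)
        have hcol3 : c s(v, w) = c₃ := hc₃ _ hcol1 hcol2
        have hwC : w ∈ C :=
          (ConnectedComponent.connectedComponentMk_eq_of_adj (G := colourSub G c c₃) ⟨hadj, hcol3⟩).symm
        exact Or.inr ⟨hwC, by simp [hwA, hwB]⟩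
    -- the degree bound
    have hdeg : minDeg G ≤ (G.neighborSet v).ncard := by
      have h := @SimpleGraph.minDegree_le_degree _ G _ (Classical.decRel _) v
      have hcard : (G.neighborSet v).ncard = @SimpleGraph.degree _ G v _ := by
        rw [Set.ncard_eq_toFinset_card']
        convert SimpleGraph.card_neighborSet_eq_degree G v using 1
        rw [Set.toFinset_card]
      rw [minDeg, hcard]
      exact h
    have hunion : (G.neighborSet v).ncard
        ≤ (A \ {v}).ncard + (B \ {v}).ncard + (C \ (A ∪ B)).ncard := by
      calc (G.neighborSet v).ncard ≤ ((A \ {v}) ∪ (B \ {v}) ∪ (C \ (A ∪ B))).ncard :=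
            Set.ncard_le_ncard hsub (Set.toFinite _)
        _ ≤ ((A \ {v}) ∪ (B \ {v})).ncard + (C \ (A ∪ B)).ncard :=
            Set.ncard_union_le _ _
        _ ≤ (A \ {v}).ncard + (B \ {v}).ncard + (C \ (A ∪ B)).ncard := by
            have := Set.ncard_union_le (A \ {v}) (B \ {v})
            omega
    have hAv : (A \ {v}).ncard = A.ncard - 1 := Set.ncard_diff_singleton_of_mem hvA
    have hBv : (B \ {v}).ncard = B.ncard - 1 := Set.ncard_diff_singleton_of_mem hvB
    have hApos : 0 < A.ncard := supp_ncard_pos _ _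
    have hBpos : 0 < B.ncard := supp_ncard_pos _ _
    have hCpos : 0 < C.ncard := supp_ncard_pos _ _
    by_cases hCC : (C \ (A ∪ B)).Nonempty
    · obtain ⟨w, hwC, hwAB⟩ := hCC
      have hwv : w ≠ v := by
        intro h; exact hwAB (Or.inl (h ▸ hvA))
      have hmono : IsMonoComp G c c₃ ((colourSub G c c₃).connectedComponentMk v) :=
        exists_adj_of_ne _ hwv hwC
      have hCn : 2 * C.ncard < n := hsmall c₃ _ hmono
      refine ⟨hCn, ?_⟩
      have hCsub : (C \ (A ∪ B)).ncard ≤ C.ncard - 1 := by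
        have h1' : C \ (A ∪ B) ⊆ C \ {v} := by
          intro x hx
          exact ⟨hx.1, fun h => hx.2 (Or.inl (by simpa using h ▸ hvA))⟩
        have h2' := Set.ncard_le_ncard h1' (Set.toFinite _)
        rw [Set.ncard_diff_singleton_of_mem hvC] at h2'
        exact h2'
      omega
    · rw [Set.not_nonempty_iff_eq_empty] at hCC
      rw [hCC, Set.ncard_empty] at hunion
      omega
  -- now count the colour-c₃ components
  haveI : Fintype (colourSub G c c₃).ConnectedComponent := Fintype.ofFinite _
  have hsum : ∑ K : (colourSub G c c₃).ConnectedComponent, K.supp.ncard = n := sum_supp_card _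
  have hbig : ∀ K : (colourSub G c c₃).ConnectedComponent,
      2 * n + 18 ≤ 6 * K.supp.ncard ∧ 2 * K.supp.ncard < n := by
    intro K
    obtain ⟨v, rfl⟩ := K.exists_rep
    exact ⟨(key v).2, (key v).1⟩
  set t := Fintype.card (colourSub G c c₃).ConnectedComponent with ht
  have hne' : (Finset.univ : Finset (colourSub G c c₃).ConnectedComponent).Nonempty :=
    ⟨(colourSub G c c₃).connectedComponentMk ⟨0, hn⟩, Finset.mem_univ _⟩
  have h2n : 2 * n < t * n := by
    calc 2 * n = ∑ K : (colourSub G c c₃).ConnectedComponent, 2 * K.supp.ncard := by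
          rw [← Finset.mul_sum, hsum]
      _ < ∑ _K : (colourSub G c c₃).ConnectedComponent, n :=
          Finset.sum_lt_sum_of_nonempty hne' (fun K _ => (hbig K).2)
      _ = t * n := by rw [Finset.sum_const, Finset.card_univ, smul_eq_mul]
  have ht3 : 3 ≤ t := by
    by_contra h
    push_neg at h
    have : t * n ≤ 2 * n := Nat.mul_le_mul_right n (by omega)
    omega
  have h6n : t * (2 * n + 18) ≤ 6 * n := by
    calc t * (2 * n + 18) = ∑ _K : (colourSub G c c₃).ConnectedComponent, (2 * n + 18) := by
          rw [Finset.sum_const, Finset.card_univ, smul_eq_mul]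
      _ ≤ ∑ K : (colourSub G c c₃).ConnectedComponent, 6 * K.supp.ncard :=
          Finset.sum_le_sum (fun K _ => (hbig K).1)
      _ = 6 * n := by rw [← Finset.mul_sum, hsum]
  have : 3 * (2 * n + 18) ≤ t * (2 * n + 18) := Nat.mul_le_mul_right _ ht3
  omega
end

section
/- Let q ≥ 4 be an integer and let n = 6q + r with r ∈ {1, 2, 3, 4}. Then there exists a simple graph G on n vertices with minimum degree δ(G) = ⌊5n/6⌋ - 1 together with a 3-edge-colouring of G such that every monochromatic component has order m with 2m < n. -/
open SimpleGraph

namespace Stmt17Aux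

abbrev Cls := Fin 3 × Fin 3 × Fin 3

def prj (i : Fin 3) (x : Cls) : Fin 3 :=
  if i = 0 then x.1 else if i = 1 then x.2.1 else x.2.2

def crel (a b : Cls) : Prop := a.1 = b.1 ∨ a.2.1 = b.2.1 ∨ a.2.2 = b.2.2

instance (a b : Cls) : Decidable (crel a b) := by unfold crel; infer_instance

lemma crel_refl (a : Cls) : crel a a := Or.inl rfl

lemma crel_symm {a b : Cls} (h : crel a b) : crel b a := by
  rcases h with h | h | h
  · exact Or.inl h.symm
  · exact Or.inr (Or.inl h.symm)
  · exact Or.inr (Or.inr h.symm)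

/-- fiber of the index map over a sigma type -/
def fibEquiv (K : ℕ) (sz : Fin K → ℕ) (k : Fin K) :
    {w : Σ k : Fin K, Fin (sz k) // w.1 = k} ≃ Fin (sz k) where
  toFun w := Fin.cast (congrArg sz w.2) w.1.2
  invFun x := ⟨⟨k, x⟩, rfl⟩
  left_inv := by rintro ⟨⟨k', x⟩, h⟩; subst h; rfl
  right_inv x := rfl

lemma card_fiber (n K : ℕ) (sz : Fin K → ℕ) (e : (Σ k : Fin K, Fin (sz k)) ≃ Fin n) (k : Fin K) :
    (Finset.univ.filter fun v => (e.symm v).1 = k).card = sz k := by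
  rw [← Fintype.card_subtype]
  rw [Fintype.card_congr ((e.symm.subtypeEquiv (fun v => Iff.rfl)).trans (fibEquiv K sz k))]
  exact Fintype.card_fin _

lemma card_filter_eq (n K : ℕ) (sz : Fin K → ℕ) (f : Fin n → Fin K)
    (hfib : ∀ k, (Finset.univ.filter fun v => f v = k).card = sz k)
    (P : Fin K → Prop) [DecidablePred P] :
    (Finset.univ.filter fun v => P (f v)).card = ∑ k ∈ Finset.univ.filter P, sz k := by
  rw [Finset.card_eq_sum_card_fiberwise (f := f) (t := Finset.univ.filter P)
    (fun v hv => by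
      simpa using hv)]
  apply Finset.sum_congr rfl
  intro k hk
  simp only [Finset.mem_filter, Finset.mem_univ, true_and] at hk
  rw [← hfib k]
  congr 1
  rw [Finset.filter_filter]
  apply Finset.filter_congr
  intro v _
  constructor
  · exact fun h => h.2
  · exact fun h => ⟨h ▸ hk, h⟩

theorem master (n D : ℕ) (hn : 0 < n) (K : ℕ) (cl : Fin K → Cls) (sz : Fin K → ℕ)
    (hcard : ∑ k, sz k = n)
    (hU : ∀ k : Fin K, 0 < sz k →
      D + 1 ≤ ∑ k' ∈ Finset.univ.filter (fun k' => crel (cl k) (cl k')), sz k')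
    (hWit : ∃ k : Fin K, 0 < sz k ∧
      ∑ k' ∈ Finset.univ.filter (fun k' => crel (cl k) (cl k')), sz k' = D + 1)
    (hB : ∀ i j : Fin 3,
      2 * ∑ k ∈ Finset.univ.filter (fun k => prj i (cl k) = j), sz k < n) :
    ∃ (G : SimpleGraph (Fin n)) (c : Sym2 (Fin n) → Fin 3),
      minDeg G = D ∧
      ∀ (i : Fin 3) (Kc : (colourSub G c i).ConnectedComponent),
        IsMonoComp G c i Kc → 2 * Kc.supp.ncard < n := by
  have hcW : Fintype.card (Σ k : Fin K, Fin (sz k)) = Fintype.card (Fin n) := by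
    simp [Fintype.card_sigma, hcard]
  let e : (Σ k : Fin K, Fin (sz k)) ≃ Fin n := Fintype.equivOfCardEq hcW
  let f : Fin n → Fin K := fun v => (e.symm v).1
  have hfib : ∀ k, (Finset.univ.filter fun v => f v = k).card = sz k :=
    card_fiber n K sz e
  let Gr : SimpleGraph (Fin n) :=
    { Adj := fun u v => u ≠ v ∧ crel (cl (f u)) (cl (f v))
      symm := by constructor; rintro u v ⟨h1, h2⟩; exact ⟨h1.symm, crel_symm h2⟩
      loopless := ⟨fun v h => h.1 rfl⟩ }
  haveI instAdj : DecidableRel Gr.Adj := fun u v => by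
    show Decidable (u ≠ v ∧ crel (cl (f u)) (cl (f v)))
    infer_instance
  have hAdj : ∀ u v, Gr.Adj u v ↔ u ≠ v ∧ crel (cl (f u)) (cl (f v)) := fun _ _ => Iff.rfl
  -- degree computation
  have hdeg : ∀ v, Gr.degree v
      = (∑ k' ∈ Finset.univ.filter (fun k' => crel (cl (f v)) (cl k')), sz k') - 1 := by
    intro v
    rw [← card_filter_eq n K sz f hfib (fun k' => crel (cl (f v)) (cl k'))]
    rw [SimpleGraph.degree, SimpleGraph.neighborFinset_eq_filter]
    have hset : Finset.univ.filter (Gr.Adj v)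
        = (Finset.univ.filter fun u => crel (cl (f v)) (cl (f u))).erase v := by
      ext u
      simp only [Finset.mem_filter, Finset.mem_univ, true_and, Finset.mem_erase, hAdj]
      constructor
      · rintro ⟨h1, h2⟩; exact ⟨h1.symm, h2⟩
      · rintro ⟨h1, h2⟩; exact ⟨h1.symm, h2⟩
    rw [hset, Finset.card_erase_of_mem]
    simp [crel_refl]
  haveI : Nonempty (Fin n) := ⟨⟨0, hn⟩⟩
  obtain ⟨k0, hk0pos, hk0U⟩ := hWit
  have hged : ∀ v, D ≤ Gr.degree v := by
    intro v
    rw [hdeg]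
    have hpos : 0 < sz (f v) := (e.symm v).2.pos
    have := hU (f v) hpos
    omega
  let v0 : Fin n := e ⟨k0, ⟨0, hk0pos⟩⟩
  have hfv0 : f v0 = k0 := by simp [f, v0]
  have hdv0 : Gr.degree v0 = D := by rw [hdeg, hfv0, hk0U]; omega
  have hmindeg : minDeg Gr = D := by
    unfold minDeg
    have hinst : (Classical.decRel Gr.Adj) = instAdj := Subsingleton.elim _ _
    rw [hinst]
    refine le_antisymm ?_ ?_
    · rw [← hdv0]; exact SimpleGraph.minDegree_le_degree Gr v0
    · exact SimpleGraph.le_minDegree_of_forall_le_degree Gr D hged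
  -- colouring
  let cf : Fin n → Fin n → Fin 3 := fun u v =>
    if (cl (f u)).1 = (cl (f v)).1 then 0
    else if (cl (f u)).2.1 = (cl (f v)).2.1 then 1 else 2
  have cfsymm : ∀ u v, cf u v = cf v u := by
    intro u v
    show (if (cl (f u)).1 = (cl (f v)).1 then (0 : Fin 3)
        else if (cl (f u)).2.1 = (cl (f v)).2.1 then 1 else 2)
      = (if (cl (f v)).1 = (cl (f u)).1 then (0 : Fin 3)
        else if (cl (f v)).2.1 = (cl (f u)).2.1 then 1 else 2)
    by_cases h1 : (cl (f u)).1 = (cl (f v)).1 <;>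
      by_cases h2 : (cl (f u)).2.1 = (cl (f v)).2.1
    · rw [if_pos h1, if_pos h1.symm]
    · rw [if_pos h1, if_pos h1.symm]
    · rw [if_neg h1, if_pos h2,
        if_neg (show ¬(cl (f v)).1 = (cl (f u)).1 from fun h => h1 h.symm), if_pos h2.symm]
    · rw [if_neg h1, if_neg h2,
        if_neg (show ¬(cl (f v)).1 = (cl (f u)).1 from fun h => h1 h.symm),
        if_neg (show ¬(cl (f v)).2.1 = (cl (f u)).2.1 from fun h => h2 h.symm)]
  let c : Sym2 (Fin n) → Fin 3 := Sym2.lift ⟨cf, cfsymm⟩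
  have hcf : ∀ a b : Fin n, c s(a, b)
      = (if (cl (f a)).1 = (cl (f b)).1 then (0 : Fin 3)
        else if (cl (f a)).2.1 = (cl (f b)).2.1 then 1 else 2) := by
    intro a b
    exact Sym2.lift_mk _ a b
  have hstep0 : ∀ a b : Fin n, (colourSub Gr c 0).Adj a b →
      (cl (f a)).1 = (cl (f b)).1 := by
    intro a b hab
    obtain ⟨hGadj, hc⟩ := hab
    rw [hcf] at hc
    by_cases h1 : (cl (f a)).1 = (cl (f b)).1
    · exact h1
    · rw [if_neg h1] at hc
      split_ifs at hc <;> exact absurd hc (by decide)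
  have hstep1 : ∀ a b : Fin n, (colourSub Gr c 1).Adj a b →
      (cl (f a)).2.1 = (cl (f b)).2.1 := by
    intro a b hab
    obtain ⟨hGadj, hc⟩ := hab
    rw [hcf] at hc
    by_cases h1 : (cl (f a)).1 = (cl (f b)).1
    · rw [if_pos h1] at hc
      exact absurd hc (by decide)
    · rw [if_neg h1] at hc
      by_cases h2 : (cl (f a)).2.1 = (cl (f b)).2.1
      · exact h2
      · rw [if_neg h2] at hc
        exact absurd hc (by decide)
  have hstep2 : ∀ a b : Fin n, (colourSub Gr c 2).Adj a b →
      (cl (f a)).2.2 = (cl (f b)).2.2 := by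
    intro a b hab
    obtain ⟨hGadj, hc⟩ := hab
    have hrel : crel (cl (f a)) (cl (f b)) := hGadj.2
    rw [hcf] at hc
    by_cases h1 : (cl (f a)).1 = (cl (f b)).1
    · rw [if_pos h1] at hc
      exact absurd hc (by decide)
    · rw [if_neg h1] at hc
      by_cases h2 : (cl (f a)).2.1 = (cl (f b)).2.1
      · rw [if_pos h2] at hc
        exact absurd hc (by decide)
      · rcases hrel with h | h | h
        · exact absurd h h1
        · exact absurd h h2
        · exact h
  have hstep : ∀ (i : Fin 3) (a b : Fin n), (colourSub Gr c i).Adj a b →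
      prj i (cl (f a)) = prj i (cl (f b)) := by
    intro i a b hab
    fin_cases i
    · show prj 0 (cl (f a)) = prj 0 (cl (f b))
      unfold prj
      rw [if_pos rfl, if_pos rfl]
      exact hstep0 a b hab
    · show prj 1 (cl (f a)) = prj 1 (cl (f b))
      unfold prj
      rw [if_neg (by decide), if_pos rfl, if_neg (by decide), if_pos rfl]
      exact hstep1 a b hab
    · show prj 2 (cl (f a)) = prj 2 (cl (f b))
      unfold prj
      rw [if_neg (by decide), if_neg (by decide), if_neg (by decide), if_neg (by decide)]
      exact hstep2 a b hab
  have hreach : ∀ (i : Fin 3) (a b : Fin n), (colourSub Gr c i).Reachable a b →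
      prj i (cl (f a)) = prj i (cl (f b)) := by
    intro i a b h
    obtain ⟨w⟩ := h
    induction w with
    | nil => rfl
    | cons h p ih => exact (hstep _ _ _ h).trans ih
  refine ⟨Gr, c, hmindeg, ?_⟩
  intro i Kc hKc
  obtain ⟨u, v, huv, hmk⟩ := hKc
  have hsub : Kc.supp ⊆ {w : Fin n | prj i (cl (f w)) = prj i (cl (f u))} := by
    intro w hw
    rw [SimpleGraph.ConnectedComponent.mem_supp_iff] at hw
    have hr : (colourSub Gr c i).Reachable w u :=
      SimpleGraph.ConnectedComponent.exact (by rw [hw, hmk])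
    exact hreach i w u hr
  have hle : Kc.supp.ncard ≤ ({w : Fin n | prj i (cl (f w)) = prj i (cl (f u))}).ncard :=
    Set.ncard_le_ncard hsub (Set.toFinite _)
  have hcardset : ({w : Fin n | prj i (cl (f w)) = prj i (cl (f u))}).ncard
      = ∑ k ∈ Finset.univ.filter (fun k => prj i (cl k) = prj i (cl (f u))), sz k := by
    rw [← card_filter_eq n K sz f hfib (fun k => prj i (cl k) = prj i (cl (f u)))]
    rw [Set.ncard_eq_toFinset_card']
    congr 1
    ext w
    simp
  have := hB i (prj i (cl (f u)))
  omega

end Stmt17Aux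

open Stmt17Aux in
/-- For q ≥ 4 and n = 6q + r with r ∈ {1,2,3,4}, there is a graph G on n vertices with
δ(G) = ⌊5n/6⌋ - 1 and a 3-edge-colouring in which every monochromatic component has order m
with 2m < n. -/
theorem stmt_17 (q r : ℕ) (hq : 4 ≤ q) (hr1 : 1 ≤ r) (hr4 : r ≤ 4) :
    ∃ (G : SimpleGraph (Fin (6 * q + r))) (c : Sym2 (Fin (6 * q + r)) → Fin 3),
      minDeg G = 5 * (6 * q + r) / 6 - 1 ∧
      ∀ (i : Fin 3) (K : (colourSub G c i).ConnectedComponent),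
        IsMonoComp G c i K → 2 * K.supp.ncard < 6 * q + r := by
  interval_cases r
  · obtain ⟨G, c, h1, h2⟩ := master (6*q+1) (5*q+1-2) (by omega) 10
      ![((0:Fin 3),(0:Fin 3),(0:Fin 3)), ((0:Fin 3),(1:Fin 3),(1:Fin 3)), ((0:Fin 3),(1:Fin 3),(0:Fin 3)), ((1:Fin 3),(0:Fin 3),(1:Fin 3)), ((1:Fin 3),(0:Fin 3),(0:Fin 3)), ((1:Fin 3),(1:Fin 3),(1:Fin 3)), ((0:Fin 3),(0:Fin 3),(1:Fin 3)), ((2:Fin 3),(1:Fin 3),(0:Fin 3)), ((1:Fin 3),(2:Fin 3),(0:Fin 3)), ((1:Fin 3),(1:Fin 3),(2:Fin 3))]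
      ![q, q, q-1, q, q-1, q-1, 1, 1, 1, 1]
      (by simp only [Fin.sum_univ_succ, Fin.sum_univ_zero, Matrix.cons_val_zero,
            Matrix.cons_val_succ]; omega)
      (by simp only [Fin.forall_fin_succ, IsEmpty.forall_iff, and_true, Finset.sum_filter,
            Fin.sum_univ_succ, Fin.sum_univ_zero, Matrix.cons_val_zero, Matrix.cons_val_succ]
          simp (config := { decide := true }) [crel]
          omega)
      ⟨7, by
        refine ⟨?_, ?_⟩
        · show 0 < (1)
          omega
        · show ∑ k' ∈ Finset.univ.filter
              (fun k' => crel ((2:Fin 3),(1:Fin 3),(0:Fin 3))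
                (![((0:Fin 3),(0:Fin 3),(0:Fin 3)), ((0:Fin 3),(1:Fin 3),(1:Fin 3)), ((0:Fin 3),(1:Fin 3),(0:Fin 3)), ((1:Fin 3),(0:Fin 3),(1:Fin 3)), ((1:Fin 3),(0:Fin 3),(0:Fin 3)), ((1:Fin 3),(1:Fin 3),(1:Fin 3)), ((0:Fin 3),(0:Fin 3),(1:Fin 3)), ((2:Fin 3),(1:Fin 3),(0:Fin 3)), ((1:Fin 3),(2:Fin 3),(0:Fin 3)), ((1:Fin 3),(1:Fin 3),(2:Fin 3))] k')), ![q, q, q-1, q, q-1, q-1, 1, 1, 1, 1] k' = 5*q+1-2+1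
          rw [Finset.sum_filter]
          simp only [Fin.sum_univ_succ, Fin.sum_univ_zero, Matrix.cons_val_zero,
            Matrix.cons_val_succ]
          simp (config := { decide := true }) [crel]
          omega⟩
      (by simp only [Fin.forall_fin_succ, IsEmpty.forall_iff, and_true, Finset.sum_filter,
            Fin.sum_univ_succ, Fin.sum_univ_zero, Matrix.cons_val_zero, Matrix.cons_val_succ]
          simp (config := { decide := true }) [prj, crel]
          omega)
    exact ⟨G, c, by rw [h1]; omega, h2⟩
  · obtain ⟨G, c, h1, h2⟩ := master (6*q+2) (5*q+2-2) (by omega) 8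
      ![((0:Fin 3),(0:Fin 3),(2:Fin 3)), ((0:Fin 3),(1:Fin 3),(1:Fin 3)), ((0:Fin 3),(1:Fin 3),(2:Fin 3)), ((0:Fin 3),(2:Fin 3),(0:Fin 3)), ((1:Fin 3),(1:Fin 3),(0:Fin 3)), ((1:Fin 3),(2:Fin 3),(2:Fin 3)), ((2:Fin 3),(1:Fin 3),(2:Fin 3)), ((2:Fin 3),(2:Fin 3),(1:Fin 3))]
      ![2, q+1, q-3, q, 2, q+1, q, q-1]
      (by simp only [Fin.sum_univ_succ, Fin.sum_univ_zero, Matrix.cons_val_zero,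
            Matrix.cons_val_succ]; omega)
      (by simp only [Fin.forall_fin_succ, IsEmpty.forall_iff, and_true, Finset.sum_filter,
            Fin.sum_univ_succ, Fin.sum_univ_zero, Matrix.cons_val_zero, Matrix.cons_val_succ]
          simp (config := { decide := true }) [crel]
          omega)
      ⟨0, by
        refine ⟨?_, ?_⟩
        · show 0 < (2)
          omega
        · show ∑ k' ∈ Finset.univ.filter
              (fun k' => crel ((0:Fin 3),(0:Fin 3),(2:Fin 3))
                (![((0:Fin 3),(0:Fin 3),(2:Fin 3)), ((0:Fin 3),(1:Fin 3),(1:Fin 3)), ((0:Fin 3),(1:Fin 3),(2:Fin 3)), ((0:Fin 3),(2:Fin 3),(0:Fin 3)), ((1:Fin 3),(1:Fin 3),(0:Fin 3)), ((1:Fin 3),(2:Fin 3),(2:Fin 3)), ((2:Fin 3),(1:Fin 3),(2:Fin 3)), ((2:Fin 3),(2:Fin 3),(1:Fin 3))] k')), ![2, q+1, q-3, q, 2, q+1, q, q-1] k' = 5*q+2-2+1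
          rw [Finset.sum_filter]
          simp only [Fin.sum_univ_succ, Fin.sum_univ_zero, Matrix.cons_val_zero,
            Matrix.cons_val_succ]
          simp (config := { decide := true }) [crel]
          omega⟩
      (by simp only [Fin.forall_fin_succ, IsEmpty.forall_iff, and_true, Finset.sum_filter,
            Fin.sum_univ_succ, Fin.sum_univ_zero, Matrix.cons_val_zero, Matrix.cons_val_succ]
          simp (config := { decide := true }) [prj, crel]
          omega)
    exact ⟨G, c, by rw [h1]; omega, h2⟩
  · obtain ⟨G, c, h1, h2⟩ := master (6*q+3) (5*q+3-2) (by omega) 9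
      ![((0:Fin 3),(0:Fin 3),(0:Fin 3)), ((0:Fin 3),(0:Fin 3),(2:Fin 3)), ((0:Fin 3),(1:Fin 3),(0:Fin 3)), ((0:Fin 3),(1:Fin 3),(1:Fin 3)), ((0:Fin 3),(2:Fin 3),(1:Fin 3)), ((1:Fin 3),(0:Fin 3),(0:Fin 3)), ((1:Fin 3),(0:Fin 3),(1:Fin 3)), ((1:Fin 3),(1:Fin 3),(1:Fin 3)), ((2:Fin 3),(0:Fin 3),(1:Fin 3))]
      ![q-1, 1, q+1, q-1, 1, q+1, q-1, q+1, 1]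
      (by simp only [Fin.sum_univ_succ, Fin.sum_univ_zero, Matrix.cons_val_zero,
            Matrix.cons_val_succ]; omega)
      (by simp only [Fin.forall_fin_succ, IsEmpty.forall_iff, and_true, Finset.sum_filter,
            Fin.sum_univ_succ, Fin.sum_univ_zero, Matrix.cons_val_zero, Matrix.cons_val_succ]
          simp (config := { decide := true }) [crel]
          omega)
      ⟨0, by
        refine ⟨?_, ?_⟩
        · show 0 < (q-1)
          omega
        · show ∑ k' ∈ Finset.univ.filter
              (fun k' => crel ((0:Fin 3),(0:Fin 3),(0:Fin 3))
                (![((0:Fin 3),(0:Fin 3),(0:Fin 3)), ((0:Fin 3),(0:Fin 3),(2:Fin 3)), ((0:Fin 3),(1:Fin 3),(0:Fin 3)), ((0:Fin 3),(1:Fin 3),(1:Fin 3)), ((0:Fin 3),(2:Fin 3),(1:Fin 3)), ((1:Fin 3),(0:Fin 3),(0:Fin 3)), ((1:Fin 3),(0:Fin 3),(1:Fin 3)), ((1:Fin 3),(1:Fin 3),(1:Fin 3)), ((2:Fin 3),(0:Fin 3),(1:Fin 3))] k')), ![q-1, 1, q+1, q-1, 1, q+1, q-1, q+1, 1] k' =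 5*q+3-2+1
          rw [Finset.sum_filter]
          simp only [Fin.sum_univ_succ, Fin.sum_univ_zero, Matrix.cons_val_zero,
            Matrix.cons_val_succ]
          simp (config := { decide := true }) [crel]
          omega⟩
      (by simp only [Fin.forall_fin_succ, IsEmpty.forall_iff, and_true, Finset.sum_filter,
            Fin.sum_univ_succ, Fin.sum_univ_zero, Matrix.cons_val_zero, Matrix.cons_val_succ]
          simp (config := { decide := true }) [prj, crel]
          omega)
    exact ⟨G, c, by rw [h1]; omega, h2⟩
  · obtain ⟨G, c, h1, h2⟩ := master (6*q+4) (5*q+4-2) (by omega) 8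
      ![((0:Fin 3),(0:Fin 3),(0:Fin 3)), ((0:Fin 3),(1:Fin 3),(2:Fin 3)), ((1:Fin 3),(0:Fin 3),(2:Fin 3)), ((1:Fin 3),(2:Fin 3),(0:Fin 3)), ((2:Fin 3),(0:Fin 3),(1:Fin 3)), ((2:Fin 3),(0:Fin 3),(2:Fin 3)), ((2:Fin 3),(1:Fin 3),(0:Fin 3)), ((2:Fin 3),(2:Fin 3),(2:Fin 3))]
      ![q+1, 2, q+1, q-1, 2, q-3, q+1, q+1]
      (by simp only [Fin.sum_univ_succ, Fin.sum_univ_zero, Matrix.cons_val_zero,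
            Matrix.cons_val_succ]; omega)
      (by simp only [Fin.forall_fin_succ, IsEmpty.forall_iff, and_true, Finset.sum_filter,
            Fin.sum_univ_succ, Fin.sum_univ_zero, Matrix.cons_val_zero, Matrix.cons_val_succ]
          simp (config := { decide := true }) [crel]
          omega)
      ⟨0, by
        refine ⟨?_, ?_⟩
        · show 0 < (q+1)
          omega
        · show ∑ k' ∈ Finset.univ.filter
              (fun k' => crel ((0:Fin 3),(0:Fin 3),(0:Fin 3))
                (![((0:Fin 3),(0:Fin 3),(0:Fin 3)), ((0:Fin 3),(1:Fin 3),(2:Fin 3)), ((1:Fin 3),(0:Fin 3),(2:Fin 3)), ((1:Fin 3),(2:Fin 3),(0:Fin 3)), ((2:Fin 3),(0:Fin 3),(1:Fin 3)), ((2:Fin 3),(0:Fin 3),(2:Fin 3)), ((2:Fin 3),(1:Fin 3),(0:Fin 3)), ((2:Fin 3),(2:Fin 3),(2:Fin 3))] k')), ![q+1, 2, q+1, q-1, 2, q-3, q+1, q+1] k' = 5*q+4-2+1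
          rw [Finset.sum_filter]
          simp only [Fin.sum_univ_succ, Fin.sum_univ_zero, Matrix.cons_val_zero,
            Matrix.cons_val_succ]
          simp (config := { decide := true }) [crel]
          omega⟩
      (by simp only [Fin.forall_fin_succ, IsEmpty.forall_iff, and_true, Finset.sum_filter,
            Fin.sum_univ_succ, Fin.sum_univ_zero, Matrix.cons_val_zero, Matrix.cons_val_succ]
          simp (config := { decide := true }) [prj, crel]
          omega)
    exact ⟨G, c, by rw [h1]; omega, h2⟩
end
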